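/- The evolution algebra A over ℤ/4ℤ with basis (x_i)_{i≥1} and relations x_i·x_i = 2x_i + x_{i+1}, x_i·x_j = 0 for i ≠ j, is not nilpotent: for every n ≥ 2 the left-normed product ((x_1·x_1)·x_2)·x_3 ⋯ ·x_{n-1} of the n elements x_1, x_1, x_2, …, x_{n-1} equals 2x_{n-1} + x_n, which is nonzero. Hence there is no n with A^n = (0). -/

import Mathlib

/-!
Right multiplication by a basis vector keeps a single coordinate: `a · x_j = a(j) • x_j²`.
Since `x_k² = 2x_k + x_{k+1}` has coefficient `1` at `x_{k+1}`, multiplying it by `x_{k+1}`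
gives `x_{k+1}²`, so the left-normed product `x_1 · x_1 · x_2 ⋯ x_k` is `x_k²`, which is never `0`.
-/

/-!
The evolution algebra `A` over `R = ℤ/4ℤ` with basis `(x_i)_{i ≥ 1}` indexed by
`ℕ+` (underlying module `ℕ+ →₀ ZMod 4`, `x_i = Finsupp.single i 1`) and
relations `x_i · x_i = 2x_i + x_{i+1}`, `x_i · x_j = 0` for `i ≠ j`;
concretely `(a · b) = ∑_i a(i) * b(i) • (2 • x_i + x_{i+1})`.
-/
noncomputable def evolMul {R : Type*} [CommRing R] {ι : Type*}
    (Csq : ι → ι →₀ R) (a b : ι →₀ R) : ι →₀ R :=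
  a.sum fun i ai => (ai * b i) • Csq i

/-- The squares of the basis elements: `x_i · x_i = 2 • x_i + x_{i+1}`. -/
noncomputable def sqZ4 : ℕ+ → (ℕ+ →₀ ZMod 4) := fun i =>
  (2 : ZMod 4) • Finsupp.single i 1 + Finsupp.single (i + 1) 1

/-- Left-normed products: `lnp mul f m = ((f 0 · f 1) · f 2) ⋯ · f m`
is the left-normed product of the `m + 1` elements `f 0, …, f m`. -/
def lnp {A : Type*} (mul : A → A → A) (f : ℕ → A) : ℕ → A
  | 0 => f 0
  | m + 1 => mul (lnp mul f m) (f (m + 1))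

theorem evolMul_single_right {R ι : Type*} [CommRing R] (C : ι → ι →₀ R) (a : ι →₀ R)
    (j : ι) (s : R) : evolMul C a (Finsupp.single j s) = (a j * s) • C j := by
  classical
  unfold evolMul
  rw [Finsupp.sum_eq_single j]
  · simp
  · intro i _ hij
    simp [Finsupp.single_eq_of_ne hij]
  · simp

theorem Nat.toPNat'_add_two (m : ℕ) : (m + 2).toPNat' = (m + 1).toPNat' + 1 := rfl

theorem sqZ4_apply_succ (k : ℕ+) : sqZ4 k (k + 1) = 1 := by
  simp [sqZ4, Finsupp.single_eq_of_ne (ne_of_lt (PNat.lt_add_right k 1)).symm]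

theorem sqZ4_ne_zero (k : ℕ+) : sqZ4 k ≠ 0 := fun h =>
  (by decide : (0 : ZMod 4) ≠ 1) (by simpa [h] using sqZ4_apply_succ k)

theorem lnp_evolMul_sqZ4 (m : ℕ) :
    lnp (evolMul sqZ4) (fun j : ℕ => Finsupp.single j.toPNat' (1 : ZMod 4)) (m + 1)
      = sqZ4 (m + 1).toPNat' := by
  induction m with
  | zero =>
    rw [lnp, lnp, evolMul_single_right]
    show (Finsupp.single (1 : ℕ+) (1 : ZMod 4) 1 * 1) • sqZ4 1 = sqZ4 1
    simp
  | succ m ih =>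
    rw [lnp, ih, Nat.toPNat'_add_two, evolMul_single_right, sqZ4_apply_succ, one_mul, one_smul]

theorem example_Z4_not_nilpotent :
    (∀ n : ℕ, 2 ≤ n →
      lnp (evolMul sqZ4) (fun j : ℕ => Finsupp.single j.toPNat' (1 : ZMod 4)) (n - 1)
          = (2 : ZMod 4) • Finsupp.single (n - 1).toPNat' 1
              + Finsupp.single n.toPNat' 1 ∧
      lnp (evolMul sqZ4) (fun j : ℕ => Finsupp.single j.toPNat' (1 : ZMod 4)) (n - 1)
          ≠ 0) ∧
    ¬ (∃ n : ℕ, 2 ≤ n ∧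
        ∀ f : ℕ → (ℕ+ →₀ ZMod 4), lnp (evolMul sqZ4) f (n - 1) = 0) := by
  have key (n : ℕ) (hn : 2 ≤ n) :
      lnp (evolMul sqZ4) (fun j : ℕ => Finsupp.single j.toPNat' (1 : ZMod 4)) (n - 1)
        = sqZ4 (n - 1).toPNat' := by
    obtain ⟨m, rfl⟩ := Nat.exists_eq_add_of_le' hn
    exact lnp_evolMul_sqZ4 m
  refine ⟨fun n hn => ⟨?_, key n hn ▸ sqZ4_ne_zero _⟩, ?_⟩
  · obtain ⟨m, rfl⟩ := Nat.exists_eq_add_of_le' hn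
    -- the right side is `sqZ4 (m + 1).toPNat'` unfolded, up to `Nat.toPNat'_add_two`
    exact lnp_evolMul_sqZ4 m
  · rintro ⟨n, hn, hzero⟩
    exact sqZ4_ne_zero _ (key n hn ▸ hzero _)
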